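/- For n ≥ 2, the following recursion holds in B_n(ω) ⊗_F F(u_1,…,u_n): Ψ(u_1,…,u_n) = Ψ(u_1,…,u_{n−1}) · (1 − e_{n−1,n}/(u_{n−1}+u_n))(1 − e_{n−2,n}/(u_{n−2}+u_n))⋯(1 − e_{1,n}/(u_1+u_n)) · (1 − s_{1,n}/(u_1−u_n))(1 − s_{2,n}/(u_2−u_n))⋯(1 − s_{n−1,n}/(u_{n−1}−u_n)), where Ψ(u_1,…,u_{n−1}) = ∏_{1≤i<j≤n−1}(1 − e_{ij}/(u_i+u_j)) · ∏_{1≤i<j≤n−1}(1 − s_{ij}/(u_i−u_j)) with products in lexicographic order on (i,j). -/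

import Mathlib

/-!
Common definitions for the fusion procedure for the Brauer algebra
(Isaev–Molev, "Fusion procedure for the Brauer algebra").
-/

noncomputable section
open scoped BigOperators
open Classical

namespace BrauerFusion

/-- The base field `F = ℂ(ω)`. -/
abbrev F : Type := RatFunc ℂ

/-- The indeterminate `ω ∈ ℂ(ω)`. -/
def ωF : F := RatFunc.X

/-- `s e : ℕ → A` satisfy the defining relations of the Brauer algebra `B_n(ω)`
over the commutative base `R`; here `s i`, `e i` represent the generators
`s_i`, `e_i` for `1 ≤ i ≤ n - 1` (values at other indices are irrelevant). -/
structure IsBrauer {R : Type*} {A : Type*} [CommRing R] [Ring A] [Algebra R A]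
    (n : ℕ) (ω : R) (s e : ℕ → A) : Prop where
  ss : ∀ i, 1 ≤ i → i + 1 ≤ n → s i * s i = 1
  ee : ∀ i, 1 ≤ i → i + 1 ≤ n → e i * e i = ω • e i
  se : ∀ i, 1 ≤ i → i + 1 ≤ n → s i * e i = e i
  es : ∀ i, 1 ≤ i → i + 1 ≤ n → e i * s i = e i
  ss_comm : ∀ i j, 1 ≤ i → j + 1 ≤ n → i + 1 < j → s i * s j = s j * s i
  ee_comm : ∀ i j, 1 ≤ i → j + 1 ≤ n → i + 1 < j → e i * e j = e j * e i
  se_comm : ∀ i j, 1 ≤ i → j + 1 ≤ n → i + 1 < j → s i * e j = e j * s i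
  es_comm : ∀ i j, 1 ≤ i → j + 1 ≤ n → i + 1 < j → s j * e i = e i * s j
  braid : ∀ i, 1 ≤ i → i + 2 ≤ n → s i * s (i+1) * s i = s (i+1) * s i * s (i+1)
  eee₁ : ∀ i, 1 ≤ i → i + 2 ≤ n → e i * e (i+1) * e i = e i
  eee₂ : ∀ i, 1 ≤ i → i + 2 ≤ n → e (i+1) * e i * e (i+1) = e (i+1)
  see : ∀ i, 1 ≤ i → i + 2 ≤ n → s i * e (i+1) * e i = s (i+1) * e i
  ees : ∀ i, 1 ≤ i → i + 2 ≤ n → e (i+1) * e i * s (i+1) = e (i+1) * s i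

variable {A : Type*} [Ring A]

/-- The transposition `s_{ij} = s_i s_{i+1} ⋯ s_{j-2} s_{j-1} s_{j-2} ⋯ s_{i+1} s_i`
(for `i < j`), defined by `s_{i,i+1} = s_i` and `s_{ij} = s_i s_{i+1,j} s_i`. -/
def sij (s : ℕ → A) (i j : ℕ) : A :=
  if h : i + 1 < j then s i * sij s (i+1) j * s i else s i
termination_by j - i
decreasing_by omega

/-- The element `e_{ij} = s_{i,j-1} e_{j-1} s_{i,j-1}` (for `i < j`), with `e_{i,i+1} = e_i`. -/
def eij (s e : ℕ → A) (i j : ℕ) : A :=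
  if i + 1 < j then sij s i (j-1) * e (j-1) * sij s i (j-1) else e i

/-- `x_j^{(m)} = (ω-1)/2 + ∑_{r=1}^{j-1} (s_{rm} - e_{rm})`. -/
def jmM {R : Type*} [Field R] [Algebra R A] (ω : R) (s e : ℕ → A) (j m : ℕ) : A :=
  algebraMap R A ((ω - 1) / 2) + ∑ r ∈ Finset.Icc 1 (j-1), (sij s r m - eij s e r m)

/-- The Jucys–Murphy element `x_r = (ω-1)/2 + ∑_{k=1}^{r-1} (s_{kr} - e_{kr})`. -/
def jm {R : Type*} [Field R] [Algebra R A] (ω : R) (s e : ℕ → A) (r : ℕ) : A :=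
  jmM ω s e r r

/-- The pairs `(i, j)` with `1 ≤ i < j ≤ n` in lexicographic order. -/
def lexPairs (n : ℕ) : List (ℕ × ℕ) :=
  (List.range' 1 n).flatMap fun i =>
    ((List.range' 1 n).filter fun j => decide (i < j)).map fun j => (i, j)

/-- The rational function
`Ψ(u_1,…,u_n) = ∏_{1≤i<j≤n} (1 - e_{ij}/(u_i+u_j)) ∏_{1≤i<j≤n} (1 - s_{ij}/(u_i-u_j))`,
with ordered products over the pairs `(i,j)` in lexicographic order. -/
def Psi {K : Type*} [Field K] [Algebra K A] (s e : ℕ → A) (n : ℕ) (u : ℕ → K) : A :=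
  ((lexPairs n).map fun p => 1 - (u p.1 + u p.2)⁻¹ • eij s e p.1 p.2).prod *
  ((lexPairs n).map fun p => 1 - (u p.1 - u p.2)⁻¹ • sij s p.1 p.2).prod

/-- An updown tableau of length `n`: a sequence of Young diagrams
`Λ_0 = ∅, Λ_1, …, Λ_n` in which `Λ_r` is obtained from `Λ_{r-1}` by adding
(`add r = true`) or removing (`add r = false`) the box `box r`. -/
structure UpDownTableau (n : ℕ) where
  shape : ℕ → YoungDiagram
  box : ℕ → ℕ × ℕ
  add : ℕ → Bool
  shape_zero : shape 0 = ⊥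
  step_add : ∀ r, 1 ≤ r → r ≤ n → add r = true →
    box r ∉ shape (r-1) ∧ (shape r).cells = insert (box r) (shape (r-1)).cells
  step_rem : ∀ r, 1 ≤ r → r ≤ n → add r = false →
    box r ∉ shape r ∧ (shape (r-1)).cells = insert (box r) (shape r).cells

/-- The content `c_r` of an updown tableau: `(ω-1)/2 + j - i` if the box `(i,j)` was
added at step `r`, and `-((ω-1)/2 + j - i)` if it was removed. -/
def content {R : Type*} [Field R] (ω : R) {n : ℕ} (T : UpDownTableau n) (r : ℕ) : R :=
  if T.add r then (ω - 1) / 2 + ((T.box r).2 : R) - ((T.box r).1 : R)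
  else -((ω - 1) / 2 + ((T.box r).2 : R) - ((T.box r).1 : R))

/-- The content attached to a box `b` which can be removed from (`b ∈ μ`) or
added to (`b ∉ μ`) the diagram `μ`. -/
def boxContent {R : Type*} [Field R] (ω : R) (μ : YoungDiagram) (b : ℕ × ℕ) : R :=
  if b ∈ μ then -((ω - 1) / 2 + (b.2 : R) - (b.1 : R))
  else (ω - 1) / 2 + (b.2 : R) - (b.1 : R)

/-- All boxes `(i,j)` with `i, j < N`, listed in lexicographic order. -/
def gridList (N : ℕ) : List (ℕ × ℕ) :=
  (List.range N).flatMap fun i => (List.range N).map fun j => (i, j)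

/-- A box which can be added to, or removed from, the Young diagram `μ`
so that the result is again a Young diagram. -/
def isCandidate (μ : YoungDiagram) (b : ℕ × ℕ) : Prop :=
  (b ∉ μ ∧ ∃ ν : YoungDiagram, ν.cells = insert b μ.cells) ∨
  (b ∈ μ ∧ ∃ ν : YoungDiagram, μ.cells = insert b ν.cells)

/-- The list of all boxes which can be added to or removed from `μ`. -/
def candList (μ : YoungDiagram) : List (ℕ × ℕ) :=
  (gridList (μ.card + 2)).filter fun b => decide (isCandidate μ b)

/-- The primitive idempotent `E_{(Λ_1,…,Λ_r)}`, defined recursively by `E = 1` for `r = 0`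
and `E_T = E_U ∏_a (x_r - a)/(c_r - a)`, the product over the contents `a` of all boxes
(other than the box of step `r`) which can be added to or removed from `Λ_{r-1}`. -/
def idem {R : Type*} [Field R] [Algebra R A] (ω : R) (s e : ℕ → A) {n : ℕ}
    (T : UpDownTableau n) : ℕ → A
  | 0 => 1
  | r + 1 =>
    idem ω s e T r *
      (((candList (T.shape r)).filter (fun b => decide (b ≠ T.box (r+1)))).map fun b =>
        (content ω T (r+1) - boxContent ω (T.shape r) b)⁻¹ •
          (jm ω s e (r+1) - algebraMap R A (boxContent ω (T.shape r) b))).prod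

/-- `d_k` : the number of steps among the first `len` steps of `T` adding a box
on the diagonal `k`. -/
def dAdd {n : ℕ} (T : UpDownTableau n) (len : ℕ) (k : ℤ) : ℤ :=
  (((Finset.Icc 1 len).filter fun t =>
    T.add t = true ∧ ((T.box t).2 : ℤ) - ((T.box t).1 : ℤ) = k).card : ℤ)

/-- `d'_k` : the number of steps among the first `len` steps of `T` removing a box
on the diagonal `k`. -/
def dRem {n : ℕ} (T : UpDownTableau n) (len : ℕ) (k : ℤ) : ℤ :=
  (((Finset.Icc 1 len).filter fun t =>
    T.add t = false ∧ ((T.box t).2 : ℤ) - ((T.box t).1 : ℤ) = k).card : ℤ)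

/-- `g_k = δ_{k0} + d_{k-1} + d_{k+1} - 2 d_k`. -/
def gAdd {n : ℕ} (T : UpDownTableau n) (len : ℕ) (k : ℤ) : ℤ :=
  (if k = 0 then 1 else 0) + dAdd T len (k-1) + dAdd T len (k+1) - 2 * dAdd T len k

/-- `g'_k = d'_{k-1} + d'_{k+1} - 2 d'_k`. -/
def gRem {n : ℕ} (T : UpDownTableau n) (len : ℕ) (k : ℤ) : ℤ :=
  dRem T len (k-1) + dRem T len (k+1) - 2 * dRem T len k

/-- The diagonal `j - i` of the box of step `r`. -/
def diagOf {n : ℕ} (T : UpDownTableau n) (r : ℕ) : ℤ :=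
  ((T.box r).2 : ℤ) - ((T.box r).1 : ℤ)

/-- The exponent `p_r` of an updown tableau: `p_r = 1 - g_{k_r}` if a box is added on the
diagonal `k_r` at step `r`, and `p_r = 1 - g'_{k_r}` if a box is removed, where `g, g'`
are computed from the first `r - 1` steps. -/
def pExp {n : ℕ} (T : UpDownTableau n) (r : ℕ) : ℤ :=
  1 - (if T.add r then gAdd T (r-1) (diagOf T r) else gRem T (r-1) (diagOf T r))

/-- The factor `φ(U, T)` in the recursive definition of `f(T)`; the products over all
integers `k` are realized as products over `-r-1 ≤ k ≤ r+1`, which contains the support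
of `g` and `g'` (all other factors are equal to 1). -/
def phiStep {n : ℕ} (T : UpDownTableau n) (r : ℕ) : F :=
  if T.add r then
    (∏ k ∈ (Finset.Icc (-(r:ℤ)-1) ((r:ℤ)+1)).erase (diagOf T r),
      ((diagOf T r - k : ℤ) : F) ^ gAdd T (r-1) k) *
    ∏ k ∈ Finset.Icc (-(r:ℤ)-1) ((r:ℤ)+1),
      (((diagOf T r + k : ℤ) : F) + ωF - 1) ^ gRem T (r-1) k
  else
    (∏ k ∈ (Finset.Icc (-(r:ℤ)-1) ((r:ℤ)+1)).erase (diagOf T r),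
      ((k - diagOf T r : ℤ) : F) ^ gRem T (r-1) k) *
    ∏ k ∈ Finset.Icc (-(r:ℤ)-1) ((r:ℤ)+1),
      ((1 : F) - ωF - ((diagOf T r + k : ℤ) : F)) ^ gAdd T (r-1) k

/-- The scalar `f(T) ∈ ℂ(ω)`, defined recursively by `f(∅) = 1`, `f(T) = f(U) φ(U,T)`. -/
def fT {n : ℕ} (T : UpDownTableau n) : ℕ → F
  | 0 => 1
  | r + 1 => fT T r * phiStep T (r+1)

/-- The hook length of the box `b` in the Young diagram `μ`. -/
def hookLength (μ : YoungDiagram) (b : ℕ × ℕ) : ℕ :=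
  (μ.cells.filter fun c => c.1 = b.1 ∧ b.2 < c.2).card +
  (μ.cells.filter fun c => c.2 = b.2 ∧ b.1 < c.1).card + 1

/-- The product of the hook lengths of all boxes of `μ`. -/
def hookProd (μ : YoungDiagram) : ℕ :=
  ∏ b ∈ μ.cells, hookLength μ b

/-- Polynomials in the variables `u_1, u_2, …` over `F = ℂ(ω)`. -/
abbrev MvP : Type := MvPolynomial ℕ F

/-- The field `F(u_1, u_2, …)` of rational functions in the variables `u_r` over `ℂ(ω)`. -/
abbrev KK : Type := FractionRing MvP

/-- Substituting `u_r = c` into a polynomial in the `u`'s. -/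
def substOne (r : ℕ) (c : F) : MvP →ₐ[F] MvP :=
  MvPolynomial.aeval fun t => if t = r then MvPolynomial.C c else MvPolynomial.X t

/-- The variable `u_r` as an element of `KK`. -/
def uVar (r : ℕ) : KK := algebraMap MvP KK (MvPolynomial.X r)

/-- A constant (an element of `ℂ(ω)`) as an element of `KK`. -/
def cK (x : F) : KK := algebraMap MvP KK (MvPolynomial.C x)

/-- The element `ω` of `KK`. -/
def ωK : KK := cK ωF

/-- `RegK r c f v` : the rational function `f ∈ F(u_1, u_2, …)`, viewed as a rational
function of the variable `u_r`, is regular at `u_r = c`, with value `v` there. -/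
def RegK (r : ℕ) (c : F) (f v : KK) : Prop :=
  ∃ p q : MvP, substOne r c q ≠ 0 ∧
    f = algebraMap MvP KK p / algebraMap MvP KK q ∧
    v = algebraMap MvP KK (substOne r c p) / algebraMap MvP KK (substOne r c q)

/-- The subring of "constants": the subring generated by the `s_i`, `e_i` and the
scalars from `ℂ(ω)` (i.e. the copy of the Brauer algebra `B_n(ω)` inside `B_n(ω) ⊗ KK`). -/
def constSubK [Algebra KK A] (s e : ℕ → A) : Subring A :=
  Subring.closure (Set.range s ∪ Set.range e ∪ Set.range fun x : F => algebraMap KK A (cK x))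

/-- `RegStep s e r c a v` : the element `a` of `B ⊗ F(u_1,…,u_n)`, viewed as a rational
function of `u_r`, is regular at `u_r = c` with value `v`: it can be written as a finite sum
`a = ∑ f_i • b_i` with constant `b_i` and coordinates `f_i` regular at `u_r = c` (denominators
not vanishing at `u_r = c`), whose values at `u_r = c` give `v = ∑ f_i(c) • b_i`. -/
def RegStep [Algebra KK A] (s e : ℕ → A) (r : ℕ) (c : F) (a v : A) : Prop :=
  ∃ (m : ℕ) (f g : Fin m → KK) (b : Fin m → A),
    (∀ i, RegK r c (f i) (g i)) ∧ (∀ i, b i ∈ constSubK s e) ∧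
    a = ∑ i, f i • b i ∧ v = ∑ i, g i • b i

end BrauerFusion

/-!
Both lexicographic products in `Ψ(u_1,…,u_n)` end with the column of pairs `(i, n)`, and the
columns can be split off, since a factor indexed by `(i, n)` commutes with every factor indexed by
a later pair `(k, j)`, `i < k < j < n`. The recursion then says that the column
`∏_{i<n} (1 - e_{in}/(u_i+u_n))` passes through `∏_{i<j<n} (1 - s_{ij}/(u_i-u_j))` with its order
reversed. Building the second product up one column `m` at a time, this comes down to the relation
`(1 - e_{in}/(u_i+u_n)) (1 - e_{mn}/(u_m+u_n)) (1 - s_{im}/(u_i-u_m))` = the same product reversed,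
for `i < m < n`. That relation holds because `s_{im} e_{in} = e_{mn} s_{im}`,
`e_{in} e_{mn} = s_{im} e_{mn}` and their mirror images hold in `B_n(ω)`, and because
`1/((u_i+u_n)(u_m+u_n)) + 1/((u_i+u_n)(u_i-u_m)) = 1/((u_m+u_n)(u_i-u_m))`.
The relations between the `s_{ij}` and `e_{ij}` all follow from the defining relations by peeling
off the conjugations by `s_i` in `s_{ij} = s_i s_{i+1,j} s_i` and `e_{ij} = s_i e_{i+1,j} s_i`.
-/

namespace BrauerFusion

section Conjugation

variable {M : Type*} [Monoid M]

theorem commute_iff_conj_eq {x a : M} (hx : x * x = 1) : Commute x a ↔ x * a * x = a := by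
  constructor
  · intro h
    rw [h.eq, mul_assoc, hx, mul_one]
  · intro h
    calc x * a = x * a * (x * x) := by rw [hx, mul_one]
      _ = a * x := by rw [← mul_assoc, h]

theorem conj_eq_iff_eq_conj {x a b : M} (hx : x * x = 1) : x * a * x = b ↔ a = x * b * x := by
  constructor <;> rintro rfl <;> simp only [mul_assoc, ← mul_assoc x x, hx, one_mul, mul_one]

theorem conj_mul_conj {x : M} (hx : x * x = 1) (a b : M) :
    x * a * x * (x * b * x) = x * (a * b) * x := by
  simp only [mul_assoc, ← mul_assoc x x, hx, one_mul]

theorem _root_.Commute.conj_conj_comm {x y : M} (h : Commute x y) (a : M) :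
    x * (y * a * y) * x = y * (x * a * x) * y := by
  calc x * (y * a * y) * x = x * y * a * (y * x) := by simp only [mul_assoc]
    _ = y * x * a * (x * y) := by rw [h.eq]
    _ = y * (x * a * x) * y := by simp only [mul_assoc]

theorem commute_of_conj_chain {s : ℕ → M} {x : M} {Y : ℕ → M} {i t : ℕ} (hit : i ≤ t)
    (hY : ∀ k, i ≤ k → k < t → Y k = s k * Y (k+1) * s k)
    (hs : ∀ k, i ≤ k → k < t → Commute x (s k)) (hYt : Commute x (Y t)) :
    Commute x (Y i) := by
  rcases hit.eq_or_lt with rfl | hlt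
  · exact hYt
  · have hnext : Commute x (Y (i+1)) :=
      commute_of_conj_chain hlt (fun k hk hkt => hY k (by omega) hkt)
        (fun k hk hkt => hs k (by omega) hkt) hYt
    rw [hY i le_rfl hlt]
    exact ((hs i le_rfl hlt).mul_right hnext).mul_right (hs i le_rfl hlt)
termination_by t - i

end Conjugation

section Words

variable {A : Type*} [Ring A] (s e : ℕ → A)

theorem sij_succ (i : ℕ) : sij s i (i+1) = s i := by
  rw [sij, dif_neg (lt_irrefl _)]

theorem sij_of_lt {i j : ℕ} (h : i + 1 < j) : sij s i j = s i * sij s (i+1) j * s i := by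
  rw [sij, dif_pos h]

theorem eij_succ (i : ℕ) : eij s e i (i+1) = e i := by
  rw [eij, if_neg (lt_irrefl _)]

theorem eij_succ_of_lt {i j : ℕ} (h : i < j) :
    eij s e i (j+1) = sij s i j * e j * sij s i j := by
  rw [eij, if_pos (by omega), Nat.add_sub_cancel]

variable {s e}

theorem commute_sij {x : A} {k l : ℕ} (hkl : k < l)
    (hs : ∀ t, k ≤ t → t < l → Commute x (s t)) : Commute x (sij s k l) := by
  obtain ⟨m, rfl⟩ : ∃ m, l = m + 1 := ⟨l - 1, by omega⟩
  refine commute_of_conj_chain (Y := fun k => sij s k (m+1)) (t := m) (by omega)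
    (fun k _ hkm => sij_of_lt s (by omega)) (fun t ht htm => hs t ht (by omega)) ?_
  simpa only [sij_succ] using hs m (by omega) (by omega)

theorem commute_eij_succ {x : A} {i l : ℕ} (hil : i ≤ l)
    (hs : i < l → Commute x (sij s i l)) (he : Commute x (e l)) :
    Commute x (eij s e i (l+1)) := by
  rcases hil.eq_or_lt with rfl | h
  · rwa [eij_succ]
  · rw [eij_succ_of_lt s e h]
    exact ((hs h).mul_right he).mul_right (hs h)

end Words

section Products

variable {M : Type*} [Monoid M]

theorem list_prod_map_mul_of_pairwise {ι : Type*} {L : List ι} {b g : ι → M}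
    (h : L.Pairwise fun i k => Commute (g i) (b k)) :
    (L.map fun i => b i * g i).prod = (L.map b).prod * (L.map g).prod := by
  induction L with
  | nil => simp
  | cons a L ih =>
    obtain ⟨ha, hL⟩ := List.pairwise_cons.mp h
    have hc : Commute (g a) (L.map b).prod :=
      Commute.list_prod_right _ _ fun x hx => by
        obtain ⟨k, hk, rfl⟩ := List.mem_map.mp hx
        exact ha k hk
    simp only [List.map_cons, List.prod_cons, ih hL]
    rw [mul_assoc, ← mul_assoc (g a), hc.eq, mul_assoc, mul_assoc]

theorem list_prod_reverse_mul_mul_prod {ι : Type*} (L : List ι) {a b : ι → M} {x : M}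
    (hab : ∀ i ∈ L, a i * x * b i = b i * x * a i)
    (hcomm : L.Pairwise fun i k => Commute (a i) (b k) ∧ Commute (b i) (a k)) :
    (L.reverse.map a).prod * x * (L.map b).prod = (L.map b).prod * x * (L.reverse.map a).prod := by
  induction L with
  | nil => simp
  | cons i L ih =>
    obtain ⟨hi, hL⟩ := List.pairwise_cons.mp hcomm
    have hbD : Commute (b i) (L.reverse.map a).prod :=
      Commute.list_prod_right _ _ fun y hy => by
        obtain ⟨k, hk, rfl⟩ := List.mem_map.mp hy
        exact (hi k (List.mem_reverse.mp hk)).2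
    have haT : Commute (a i) (L.map b).prod :=
      Commute.list_prod_right _ _ fun y hy => by
        obtain ⟨k, hk, rfl⟩ := List.mem_map.mp hy
        exact (hi k hk).1
    have hIH := ih (fun k hk => hab k (List.mem_cons_of_mem _ hk)) hL
    simp only [List.reverse_cons, List.map_append, List.map_cons, List.map_nil, List.prod_append,
      List.prod_cons, List.prod_nil, mul_one]
    calc (L.reverse.map a).prod * a i * x * (b i * (L.map b).prod)
        = (L.reverse.map a).prod * (a i * x * b i) * (L.map b).prod := by simp only [mul_assoc]
      _ = (L.reverse.map a).prod * b i * x * (a i * (L.map b).prod) := by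
        rw [hab i List.mem_cons_self]; simp only [mul_assoc]
      _ = b i * ((L.reverse.map a).prod * x * (L.map b).prod) * a i := by
        rw [← hbD.eq, haT.eq]; simp only [mul_assoc]
      _ = b i * (L.map b).prod * x * ((L.reverse.map a).prod * a i) := by
        rw [hIH]; simp only [mul_assoc]

theorem list_prod_map_flatMap {ι κ : Type*} (L : List ι) (F : ι → List κ) (f : κ → M) :
    ((L.flatMap F).map f).prod = (L.map fun i => ((F i).map f).prod).prod := by
  induction L with
  | nil => simp
  | cons a L ih => simp [ih]

theorem mem_lexPairs {N : ℕ} {p : ℕ × ℕ} : p ∈ lexPairs N ↔ 1 ≤ p.1 ∧ p.1 < p.2 ∧ p.2 ≤ N := by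
  obtain ⟨i, j⟩ := p
  simp only [lexPairs, List.mem_flatMap, List.mem_map, List.mem_filter, List.mem_range'_1,
    decide_eq_true_eq, Prod.mk.injEq]
  constructor
  · rintro ⟨i, hi, j, ⟨hj, hij⟩, rfl, rfl⟩
    omega
  · rintro ⟨hi, hij, hj⟩
    exact ⟨i, by omega, j, ⟨by omega, hij⟩, rfl, rfl⟩

theorem range'_one_succ (m : ℕ) : List.range' 1 (m+1) = List.range' 1 m ++ [m+1] := by
  rw [List.range'_concat, one_mul, add_comm]

theorem prod_lexPairs_succ (f : ℕ × ℕ → M) (m : ℕ)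
    (hcomm : ∀ i k j, 1 ≤ i → i < k → k < j → j ≤ m → Commute (f (i, m+1)) (f (k, j))) :
    ((lexPairs (m+1)).map f).prod =
      ((lexPairs m).map f).prod * ((List.range' 1 m).map fun i => f (i, m+1)).prod := by
  set row : ℕ → ℕ → M := fun N i =>
    ((((List.range' 1 N).filter fun j => decide (i < j)).map fun j => (i, j)).map f).prod
  have hrow : ∀ i ∈ List.range' 1 m, row (m+1) i = row m i * f (i, m+1) := by
    intro i hi
    have him : i < m + 1 := by have := (List.mem_range'_1.mp hi).2; omega
    simp [row, range'_one_succ, List.filter_append, him]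
  have hlast : row (m+1) (m+1) = 1 := by
    have hnil : ((List.range' 1 (m+1)).filter fun j => decide (m+1 < j)) = [] :=
      List.filter_eq_nil_iff.mpr fun j hj => by
        have := (List.mem_range'_1.mp hj).2
        simp only [decide_eq_true_eq]
        omega
    simp [row, hnil]
  have hpair : (List.range' 1 m).Pairwise fun i k => Commute (f (i, m+1)) (row m k) := by
    refine List.Pairwise.imp_of_mem ?_ List.pairwise_lt_range'
    intro i k hi hk hik
    refine Commute.list_prod_right _ _ fun x hx => ?_
    obtain ⟨⟨k', j⟩, hkj, rfl⟩ := List.mem_map.mp hx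
    obtain ⟨j, hj, hkj⟩ := List.mem_map.mp hkj
    cases hkj
    have hj' := List.mem_filter.mp hj
    have := List.mem_range'_1.mp hj'.1
    have := List.mem_range'_1.mp hi
    exact hcomm i k j (by omega) hik (of_decide_eq_true hj'.2) (by omega)
  simp only [lexPairs, list_prod_map_flatMap]
  show ((List.range' 1 (m+1)).map (row (m+1))).prod = ((List.range' 1 m).map (row m)).prod * _
  rw [range'_one_succ, List.map_append, List.prod_append, List.map_singleton, List.prod_singleton,
    hlast, mul_one, List.map_congr_left hrow, list_prod_map_mul_of_pairwise hpair]

end Products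

section Factors

variable {A K : Type*} [Ring A] [CommRing K] [Algebra K A]

theorem commute_one_sub_smul {X Y : A} (h : Commute X Y) (x y : K) :
    Commute (1 - x • X) (1 - y • Y) :=
  (Commute.one_left _).sub_left ((Commute.one_right _).sub_right ((h.smul_left x).smul_right y))

theorem one_sub_smul_triple_comm {a b c : K} {E F S : A}
    (hSE : S * E = F * S) (hES : E * S = S * F) (hEF : E * F = S * F) (hFE : F * E = F * S)
    (hSS : S * S = 1) (habc : a * b + a * c = b * c) :
    (1 - a • E) * (1 - b • F) * (1 - c • S) = (1 - c • S) * (1 - b • F) * (1 - a • E) := by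
  have hEF' : E * F = E * S := by rw [hEF, ← hES]
  have hFE' : F * E = S * E := by rw [hFE, ← hSE]
  have hEFS : E * (F * S) = E := by
    rw [← mul_assoc, hEF', mul_assoc, hSS, mul_one]
  have hSFE : S * (F * E) = E := by
    rw [hFE', ← mul_assoc, hSS, one_mul]
  simp only [mul_sub, sub_mul, mul_one, one_mul, smul_mul_assoc, mul_smul_comm]
  simp only [mul_assoc]
  rw [hEFS, hSFE, hEF', hFE', ← hSE, ← hES]
  match_scalars <;> first | ring1 | linear_combination habc | linear_combination -habc

end Factors

namespace IsBrauer

variable {R A : Type*} [CommRing R] [Ring A] [Algebra R A] {n : ℕ} {ω : R} {s e : ℕ → A}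

section Generators

theorem commute_s_s (hB : IsBrauer n ω s e) {i j : ℕ} (hi : 1 ≤ i) (hj : 1 ≤ j)
    (hin : i + 1 ≤ n) (hjn : j + 1 ≤ n) (hij : i + 2 ≤ j ∨ j + 2 ≤ i) : Commute (s i) (s j) := by
  rcases hij with h | h
  · exact hB.ss_comm i j hi hjn (by omega)
  · exact (hB.ss_comm j i hj hin (by omega)).symm

theorem commute_s_e (hB : IsBrauer n ω s e) {i j : ℕ} (hi : 1 ≤ i) (hj : 1 ≤ j)
    (hin : i + 1 ≤ n) (hjn : j + 1 ≤ n) (hij : i + 2 ≤ j ∨ j + 2 ≤ i) : Commute (s i) (e j) := by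
  rcases hij with h | h
  · exact hB.se_comm i j hi hjn (by omega)
  · exact hB.es_comm j i hj hin (by omega)

theorem commute_e_e (hB : IsBrauer n ω s e) {i j : ℕ} (hi : 1 ≤ i) (hj : 1 ≤ j)
    (hin : i + 1 ≤ n) (hjn : j + 1 ≤ n) (hij : i + 2 ≤ j ∨ j + 2 ≤ i) : Commute (e i) (e j) := by
  rcases hij with h | h
  · exact hB.ee_comm i j hi hjn (by omega)
  · exact (hB.ee_comm j i hj hin (by omega)).symm

theorem e_succ_mul_s_mul_s_succ (hB : IsBrauer n ω s e) {i : ℕ} (hi : 1 ≤ i) (hin : i + 2 ≤ n) :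
    e (i+1) * s i * s (i+1) = e (i+1) * e i := by
  rw [← hB.ees i hi hin, mul_assoc _ (s (i+1)), hB.ss (i+1) (by omega) hin, mul_one]

theorem s_mul_s_succ_mul_e (hB : IsBrauer n ω s e) {i : ℕ} (hi : 1 ≤ i) (hin : i + 2 ≤ n) :
    s i * s (i+1) * e i = e (i+1) * e i := by
  rw [mul_assoc, ← hB.see i hi hin, ← mul_assoc, ← mul_assoc, hB.ss i hi (by omega), one_mul]

theorem e_succ_mul_s_mul_e_succ (hB : IsBrauer n ω s e) {i : ℕ} (hi : 1 ≤ i)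
    (hin : i + 2 ≤ n) : e (i+1) * s i * e (i+1) = e (i+1) := by
  rw [← hB.ees i hi hin, mul_assoc _ (s (i+1)), hB.se (i+1) (by omega) hin, hB.eee₂ i hi hin]

theorem conj_s_mul_s_succ_e (hB : IsBrauer n ω s e) {i : ℕ} (hi : 1 ≤ i) (hin : i + 2 ≤ n) :
    s i * s (i+1) * e i * s (i+1) * s i = e (i+1) := by
  rw [hB.s_mul_s_succ_mul_e hi hin, hB.ees i hi hin, mul_assoc, hB.ss i hi (by omega), mul_one]

theorem e_mul_s_succ_mul_s (hB : IsBrauer n ω s e) {i : ℕ} (hi : 1 ≤ i) (hin : i + 2 ≤ n) :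
    e i * s (i+1) * s i = s (i+1) * s i * e (i+1) := by
  have hinv : s (i+1) * s i * (s i * s (i+1)) = 1 := by
    rw [mul_assoc, ← mul_assoc (s i), hB.ss i hi (by omega), one_mul, hB.ss (i+1) (by omega) hin]
  calc e i * s (i+1) * s i = s (i+1) * s i * (s i * s (i+1)) * (e i * s (i+1) * s i) := by
        rw [hinv, one_mul]
    _ = s (i+1) * s i * (s i * s (i+1) * e i * s (i+1) * s i) := by simp only [mul_assoc]
    _ = s (i+1) * s i * e (i+1) := by rw [hB.conj_s_mul_s_succ_e hi hin]

theorem s_mul_e_succ_mul_s (hB : IsBrauer n ω s e) {i : ℕ} (hi : 1 ≤ i) (hin : i + 2 ≤ n) :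
    s i * e (i+1) * s i = s (i+1) * e i * s (i+1) := by
  have hss := hB.ss i hi (by omega)
  calc s i * e (i+1) * s i = s i * (s i * s (i+1) * e i * s (i+1) * s i) * s i := by
        rw [hB.conj_s_mul_s_succ_e hi hin]
    _ = s i * s i * (s (i+1) * e i * s (i+1)) * (s i * s i) := by simp only [mul_assoc]
    _ = s (i+1) * e i * s (i+1) := by rw [hss, one_mul, mul_one]

theorem commute_s_succ_conj (hB : IsBrauer n ω s e) {i : ℕ} (hi : 1 ≤ i) (hin : i + 2 ≤ n)
    {y : A} (hy : Commute (s i) y) :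
    Commute (s (i+1)) (s i * s (i+1) * y * s (i+1) * s i) := by
  have hbr := hB.braid i hi hin
  calc s (i+1) * (s i * s (i+1) * y * s (i+1) * s i)
      = s (i+1) * s i * s (i+1) * y * (s (i+1) * s i) := by simp only [mul_assoc]
    _ = s i * s (i+1) * (s i * y) * (s (i+1) * s i) := by rw [← hbr]; simp only [mul_assoc]
    _ = s i * s (i+1) * y * (s i * s (i+1) * s i) := by rw [hy.eq]; simp only [mul_assoc]
    _ = s i * s (i+1) * y * s (i+1) * s i * s (i+1) := by rw [hbr]; simp only [mul_assoc]

theorem commute_e_succ_conj (hB : IsBrauer n ω s e) {i : ℕ} (hi : 1 ≤ i) (hin : i + 2 ≤ n)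
    {y : A} (hy : Commute (e i) y) :
    Commute (e (i+1)) (s i * s (i+1) * y * s (i+1) * s i) := by
  calc e (i+1) * (s i * s (i+1) * y * s (i+1) * s i)
      = e (i+1) * s i * s (i+1) * y * (s (i+1) * s i) := by simp only [mul_assoc]
    _ = s i * s (i+1) * (e i * y) * (s (i+1) * s i) := by
        rw [hB.e_succ_mul_s_mul_s_succ hi hin, ← hB.s_mul_s_succ_mul_e hi hin]
        simp only [mul_assoc]
    _ = s i * s (i+1) * y * (e i * s (i+1) * s i) := by rw [hy.eq]; simp only [mul_assoc]
    _ = s i * s (i+1) * y * s (i+1) * s i * e (i+1) := by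
        rw [hB.e_mul_s_succ_mul_s hi hin]; simp only [mul_assoc]

end Generators

section Transpositions

theorem sij_mul_self (hB : IsBrauer n ω s e) {i j : ℕ} (hi : 1 ≤ i) (hij : i < j) (hj : j ≤ n) :
    sij s i j * sij s i j = 1 := by
  rcases (show i + 1 = j ∨ i + 1 < j by omega) with rfl | h
  · rw [sij_succ]
    exact hB.ss i hi hj
  · have hss := hB.ss i hi (by omega)
    have hnext := hB.sij_mul_self (i := i+1) (by omega) h hj
    rw [sij_of_lt s h]
    calc s i * sij s (i+1) j * s i * (s i * sij s (i+1) j * s i)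
        = s i * sij s (i+1) j * (s i * s i) * sij s (i+1) j * s i := by simp only [mul_assoc]
      _ = 1 := by rw [hss, mul_one, mul_assoc (s i), hnext, mul_one, hss]
termination_by j - i

theorem commute_s_sij_of_far (hB : IsBrauer n ω s e) {t i j : ℕ} (ht : 1 ≤ t) (htn : t + 1 ≤ n)
    (hi : 1 ≤ i) (hij : i < j) (hj : j ≤ n) (hfar : t + 2 ≤ i ∨ j + 1 ≤ t) :
    Commute (s t) (sij s i j) :=
  commute_sij hij fun k hk hkj => hB.commute_s_s ht (by omega) htn (by omega) (by omega)

theorem commute_e_sij_of_far (hB : IsBrauer n ω s e) {t i j : ℕ} (ht : 1 ≤ t) (htn : t + 1 ≤ n)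
    (hi : 1 ≤ i) (hij : i < j) (hj : j ≤ n) (hfar : t + 2 ≤ i ∨ j + 1 ≤ t) :
    Commute (e t) (sij s i j) :=
  commute_sij hij fun k hk hkj => (hB.commute_s_e (by omega) ht (by omega) htn (by omega)).symm

theorem commute_s_eij_of_far (hB : IsBrauer n ω s e) {t i j : ℕ} (ht : 1 ≤ t) (htn : t + 1 ≤ n)
    (hi : 1 ≤ i) (hij : i < j) (hj : j ≤ n) (hfar : t + 2 ≤ i ∨ j + 1 ≤ t) :
    Commute (s t) (eij s e i j) := by
  obtain ⟨l, rfl⟩ : ∃ l, j = l + 1 := ⟨j - 1, by omega⟩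
  exact commute_eij_succ (by omega)
    (fun hil => hB.commute_s_sij_of_far ht htn hi hil (by omega) (by omega))
    (hB.commute_s_e ht (by omega) htn hj (by omega))

theorem commute_e_eij_of_far (hB : IsBrauer n ω s e) {t i j : ℕ} (ht : 1 ≤ t) (htn : t + 1 ≤ n)
    (hi : 1 ≤ i) (hij : i < j) (hj : j ≤ n) (hfar : t + 2 ≤ i ∨ j + 1 ≤ t) :
    Commute (e t) (eij s e i j) := by
  obtain ⟨l, rfl⟩ : ∃ l, j = l + 1 := ⟨j - 1, by omega⟩
  exact commute_eij_succ (by omega)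
    (fun hil => hB.commute_e_sij_of_far ht htn hi hil (by omega) (by omega))
    (hB.commute_e_e ht (by omega) htn hj (by omega))

theorem eij_eq_conj_eij_succ (hB : IsBrauer n ω s e) {i j : ℕ} (hi : 1 ≤ i) (hij : i + 1 < j)
    (hj : j ≤ n) :
    eij s e i j = s i * eij s e (i+1) j * s i := by
  obtain ⟨l, rfl⟩ : ∃ l, j = l + 1 := ⟨j - 1, by omega⟩
  rcases (show i + 1 = l ∨ i + 1 < l by omega) with rfl | h
  · rw [eij_succ_of_lt s e (by omega), sij_succ, eij_succ]
  · have hc : s i * e l * s i = e l :=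
      (commute_iff_conj_eq (hB.ss i hi (by omega))).mp
        (hB.commute_s_e hi (by omega) (by omega) hj (by omega))
    rw [eij_succ_of_lt s e (by omega), eij_succ_of_lt s e (by omega), sij_of_lt s h]
    calc s i * sij s (i+1) l * s i * e l * (s i * sij s (i+1) l * s i)
        = s i * sij s (i+1) l * (s i * e l * s i) * sij s (i+1) l * s i := by
          simp only [mul_assoc]
      _ = s i * (sij s (i+1) l * e l * sij s (i+1) l) * s i := by
          rw [hc]; simp only [mul_assoc]

theorem s_mul_eij_mul_s (hB : IsBrauer n ω s e) {i j : ℕ} (hi : 1 ≤ i) (hij : i + 1 < j)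
    (hj : j ≤ n) : s i * eij s e i j * s i = eij s e (i+1) j :=
  (conj_eq_iff_eq_conj (hB.ss i hi (by omega))).mpr (hB.eij_eq_conj_eij_succ hi hij hj)

theorem eij_succ_eq_conj (hB : IsBrauer n ω s e) {i j : ℕ} (hi : 1 ≤ i) (hij : i < j)
    (hj : j + 1 ≤ n) : eij s e i (j+1) = s j * eij s e i j * s j := by
  rcases (show i + 1 = j ∨ i + 1 < j by omega) with rfl | h
  · rw [eij_succ_of_lt s e (by omega), sij_succ, eij_succ]
    exact hB.s_mul_e_succ_mul_s hi hj
  · have hc : Commute (s i) (s j) := hB.commute_s_s hi (by omega) (by omega) hj (by omega)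
    rw [hB.eij_eq_conj_eij_succ hi (by omega) (by omega),
      hB.eij_succ_eq_conj (i := i+1) (by omega) h hj,
      hc.conj_conj_comm, ← hB.eij_eq_conj_eij_succ hi h (by omega)]
termination_by j - i

theorem commute_s_succ_of_conj_chain (hB : IsBrauer n ω s e) {Y : ℕ → A} {i r : ℕ}
    (hi : 1 ≤ i) (hir : i ≤ r) (hrn : r + 2 ≤ n)
    (hY : ∀ k, i ≤ k → k ≤ r + 1 → Y k = s k * Y (k+1) * s k)
    (hfar : Commute (s r) (Y (r+2))) : Commute (s (r+1)) (Y i) := by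
  refine commute_of_conj_chain hir (fun k hk hkr => hY k hk (by omega))
    (fun k hk hkr => hB.commute_s_s (by omega) (by omega) (by omega) (by omega) (by omega)) ?_
  rw [hY r hir (by omega), hY (r+1) (by omega) le_rfl]
  simpa only [mul_assoc] using hB.commute_s_succ_conj (by omega) hrn hfar

theorem commute_e_succ_of_conj_chain (hB : IsBrauer n ω s e) {Y : ℕ → A} {i r : ℕ}
    (hi : 1 ≤ i) (hir : i ≤ r) (hrn : r + 2 ≤ n)
    (hY : ∀ k, i ≤ k → k ≤ r + 1 → Y k = s k * Y (k+1) * s k)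
    (hfar : Commute (e r) (Y (r+2))) : Commute (e (r+1)) (Y i) := by
  refine commute_of_conj_chain hir (fun k hk hkr => hY k hk (by omega))
    (fun k hk hkr =>
      (hB.commute_s_e (by omega) (by omega) (by omega) (by omega) (by omega)).symm) ?_
  rw [hY r hir (by omega), hY (r+1) (by omega) le_rfl]
  simpa only [mul_assoc] using hB.commute_e_succ_conj (by omega) hrn hfar

theorem commute_s_sij_of_inner (hB : IsBrauer n ω s e) {t i j : ℕ} (hi : 1 ≤ i) (hit : i < t)
    (htj : t + 1 < j) (hj : j ≤ n) : Commute (s t) (sij s i j) := by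
  obtain ⟨r, rfl⟩ : ∃ r, t = r + 1 := ⟨t - 1, by omega⟩
  exact hB.commute_s_succ_of_conj_chain (Y := fun k => sij s k j) hi (by omega) (by omega)
    (fun k _ hk => sij_of_lt s (by omega))
    (hB.commute_s_sij_of_far (by omega) (by omega) (by omega) (by omega) hj (by omega))

theorem commute_s_eij_of_inner (hB : IsBrauer n ω s e) {t i j : ℕ} (hi : 1 ≤ i) (hit : i < t)
    (htj : t + 1 < j) (hj : j ≤ n) : Commute (s t) (eij s e i j) := by
  obtain ⟨r, rfl⟩ : ∃ r, t = r + 1 := ⟨t - 1, by omega⟩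
  exact hB.commute_s_succ_of_conj_chain (Y := fun k => eij s e k j) hi (by omega) (by omega)
    (fun k hk hkr => hB.eij_eq_conj_eij_succ (by omega) (by omega) hj)
    (hB.commute_s_eij_of_far (by omega) (by omega) (by omega) (by omega) hj (by omega))

theorem commute_e_eij_of_inner (hB : IsBrauer n ω s e) {t i j : ℕ} (hi : 1 ≤ i) (hit : i < t)
    (htj : t + 1 < j) (hj : j ≤ n) : Commute (e t) (eij s e i j) := by
  obtain ⟨r, rfl⟩ : ∃ r, t = r + 1 := ⟨t - 1, by omega⟩
  exact hB.commute_e_succ_of_conj_chain (Y := fun k => eij s e k j) hi (by omega) (by omega)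
    (fun k hk hkr => hB.eij_eq_conj_eij_succ (by omega) (by omega) hj)
    (hB.commute_e_eij_of_far (by omega) (by omega) (by omega) (by omega) hj (by omega))

end Transpositions


section Pairs

/- A pair `(i, j)` is read as an arc from `i` to `j`; the names say how the two arcs lie. -/

theorem commute_sij_sij_nested (hB : IsBrauer n ω s e) {i k l N : ℕ} (hi : 1 ≤ i)
    (hik : i < k) (hkl : k < l) (hlN : l < N) (hN : N ≤ n) :
    Commute (sij s i N) (sij s k l) :=
  commute_sij hkl fun _ hk hl => (hB.commute_s_sij_of_inner hi (by omega) (by omega) hN).symm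

theorem commute_eij_sij_nested (hB : IsBrauer n ω s e) {i k l N : ℕ} (hi : 1 ≤ i)
    (hik : i < k) (hkl : k < l) (hlN : l < N) (hN : N ≤ n) :
    Commute (eij s e i N) (sij s k l) :=
  commute_sij hkl fun _ hk hl => (hB.commute_s_eij_of_inner hi (by omega) (by omega) hN).symm

theorem commute_eij_sij_disjoint (hB : IsBrauer n ω s e) {k l m N : ℕ} (hk : 1 ≤ k)
    (hkl : k < l) (hlm : l < m) (hmN : m < N) (hN : N ≤ n) :
    Commute (eij s e m N) (sij s k l) :=
  commute_sij hkl fun _ ht htl =>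
    (hB.commute_s_eij_of_far (by omega) (by omega) (by omega) hmN hN (by omega)).symm

theorem commute_eij_eij_nested (hB : IsBrauer n ω s e) {i k j N : ℕ} (hi : 1 ≤ i)
    (hik : i < k) (hkj : k < j) (hjN : j < N) (hN : N ≤ n) :
    Commute (eij s e i N) (eij s e k j) := by
  obtain ⟨l, rfl⟩ : ∃ l, j = l + 1 := ⟨j - 1, by omega⟩
  exact commute_eij_succ (by omega)
    (fun hkl => hB.commute_eij_sij_nested hi hik hkl (by omega) hN)
    (hB.commute_e_eij_of_inner hi (by omega) hjN hN).symm

theorem sij_mul_eij_mul_sij (hB : IsBrauer n ω s e) {i m N : ℕ} (hi : 1 ≤ i) (him : i < m)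
    (hmN : m < N) (hN : N ≤ n) : sij s i m * eij s e i N * sij s i m = eij s e m N := by
  rcases (show i + 1 = m ∨ i + 1 < m by omega) with rfl | h
  · rw [sij_succ]
    exact hB.s_mul_eij_mul_s hi hmN hN
  · have hfar : s i * eij s e m N * s i = eij s e m N :=
      (commute_iff_conj_eq (hB.ss i hi (by omega))).mp
        (hB.commute_s_eij_of_far hi (by omega) (by omega) hmN hN (by omega))
    rw [sij_of_lt s h]
    calc s i * sij s (i+1) m * s i * eij s e i N * (s i * sij s (i+1) m * s i)
        = s i * (sij s (i+1) m * (s i * eij s e i N * s i) * sij s (i+1) m) * s i := by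
          simp only [mul_assoc]
      _ = eij s e m N := by
          rw [hB.s_mul_eij_mul_s hi (by omega) hN,
            hB.sij_mul_eij_mul_sij (i := i+1) (by omega) h hmN hN, hfar]
termination_by m - i

theorem commute_sij_eij_crossing (hB : IsBrauer n ω s e) {a t m N : ℕ} (ha : 1 ≤ a)
    (hat : a < t) (htm : t < m) (hmN : m < N) (hN : N ≤ n) :
    Commute (sij s a m) (eij s e t N) := by
  rcases (show a + 1 = t ∨ a + 1 < t by omega) with rfl | h
  · refine (commute_iff_conj_eq (hB.sij_mul_self ha (by omega) (by omega))).mpr ?_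
    have hnested : sij s (a+1) m * eij s e a N * sij s (a+1) m = eij s e a N :=
      (commute_iff_conj_eq (hB.sij_mul_self (by omega) htm (by omega))).mp
        (hB.commute_eij_sij_nested ha (by omega) htm hmN hN).symm
    rw [sij_of_lt s (by omega)]
    calc s a * sij s (a+1) m * s a * eij s e (a+1) N * (s a * sij s (a+1) m * s a)
        = s a * (sij s (a+1) m * (s a * eij s e (a+1) N * s a) * sij s (a+1) m) * s a := by
          simp only [mul_assoc]
      _ = eij s e (a+1) N := by
          rw [← hB.eij_eq_conj_eij_succ ha (by omega) hN, hnested,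
            hB.s_mul_eij_mul_s ha (by omega) hN]
  · have hfar : Commute (s a) (eij s e t N) :=
      hB.commute_s_eij_of_far ha (by omega) (by omega) (by omega) hN (by omega)
    rw [sij_of_lt s (by omega)]
    exact (hfar.mul_left (hB.commute_sij_eij_crossing (a := a+1) (by omega) h htm hmN hN)).mul_left
      hfar
termination_by t - a

theorem eij_succ_mul_sij_mul_eij_succ (hB : IsBrauer n ω s e) {i m : ℕ} (hi : 1 ≤ i)
    (him : i < m) (hm : m + 1 ≤ n) :
    eij s e i (m+1) * sij s i m * eij s e i (m+1) = eij s e i (m+1) := by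
  have hss := hB.ss i hi (by omega)
  rcases (show i + 1 = m ∨ i + 1 < m by omega) with rfl | h
  · rw [eij_succ_of_lt s e him, sij_succ]
    calc s i * e (i+1) * s i * s i * (s i * e (i+1) * s i)
        = s i * (e (i+1) * (s i * s i) * s i * e (i+1)) * s i := by simp only [mul_assoc]
      _ = s i * e (i+1) * s i := by rw [hss, mul_one, hB.e_succ_mul_s_mul_e_succ hi hm]
  · rw [hB.eij_eq_conj_eij_succ hi (by omega) hm, sij_of_lt s h, conj_mul_conj hss,
      conj_mul_conj hss, hB.eij_succ_mul_sij_mul_eij_succ (i := i+1) (by omega) h hm]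
termination_by m - i

theorem eij_mul_sij_mul_eij (hB : IsBrauer n ω s e) {i m N : ℕ} (hi : 1 ≤ i) (him : i < m)
    (hmN : m < N) (hN : N ≤ n) :
    eij s e i N * sij s i m * eij s e i N = eij s e i N := by
  obtain ⟨M, rfl⟩ : ∃ M, N = M + 1 := ⟨N - 1, by omega⟩
  rcases (show m = M ∨ m < M by omega) with rfl | h
  · exact hB.eij_succ_mul_sij_mul_eij_succ hi him hN
  · have hss := hB.ss M (by omega) hN
    have hfar : s M * sij s i m * s M = sij s i m :=
      (commute_iff_conj_eq hss).mp
        (hB.commute_s_sij_of_far (by omega) hN hi him (by omega) (by omega))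
    rw [hB.eij_succ_eq_conj hi (by omega) hN, ← hfar, conj_mul_conj hss, conj_mul_conj hss,
      hB.eij_mul_sij_mul_eij hi him h (by omega)]
termination_by N - m

theorem sij_mul_eij (hB : IsBrauer n ω s e) {i m N : ℕ} (hi : 1 ≤ i) (him : i < m)
    (hmN : m < N) (hN : N ≤ n) :
    sij s i m * eij s e i N = eij s e m N * sij s i m := by
  rw [← hB.sij_mul_eij_mul_sij hi him hmN hN, mul_assoc _ (sij s i m),
    hB.sij_mul_self hi him (by omega), mul_one]

theorem eij_mul_sij (hB : IsBrauer n ω s e) {i m N : ℕ} (hi : 1 ≤ i) (him : i < m)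
    (hmN : m < N) (hN : N ≤ n) :
    eij s e i N * sij s i m = sij s i m * eij s e m N := by
  rw [← hB.sij_mul_eij_mul_sij hi him hmN hN, ← mul_assoc, ← mul_assoc,
    hB.sij_mul_self hi him (by omega), one_mul]

theorem eij_mul_eij_eq_sij_mul_eij (hB : IsBrauer n ω s e) {i m N : ℕ} (hi : 1 ≤ i) (him : i < m)
    (hmN : m < N) (hN : N ≤ n) :
    eij s e i N * eij s e m N = sij s i m * eij s e m N := by
  calc eij s e i N * eij s e m N
      = eij s e i N * sij s i m * eij s e i N * sij s i m := by
        rw [← hB.sij_mul_eij_mul_sij hi him hmN hN]; simp only [mul_assoc]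
    _ = sij s i m * eij s e m N := by
        rw [hB.eij_mul_sij_mul_eij hi him hmN hN, hB.eij_mul_sij hi him hmN hN]

theorem eij_mul_eij_eq_eij_mul_sij (hB : IsBrauer n ω s e) {i m N : ℕ} (hi : 1 ≤ i) (him : i < m)
    (hmN : m < N) (hN : N ≤ n) :
    eij s e m N * eij s e i N = eij s e m N * sij s i m := by
  calc eij s e m N * eij s e i N
      = sij s i m * (eij s e i N * sij s i m * eij s e i N) := by
        rw [← hB.sij_mul_eij_mul_sij hi him hmN hN]; simp only [mul_assoc]
    _ = eij s e m N * sij s i m := by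
        rw [hB.eij_mul_sij_mul_eij hi him hmN hN, hB.sij_mul_eij hi him hmN hN]

end Pairs

end IsBrauer

section Fusion

variable {A K : Type*} [Ring A] [Field K] [Algebra K A]

def eFactor (s e : ℕ → A) (u : ℕ → K) (i j : ℕ) : A := 1 - (u i + u j)⁻¹ • eij s e i j

def sFactor (s : ℕ → A) (u : ℕ → K) (i j : ℕ) : A := 1 - (u i - u j)⁻¹ • sij s i j

theorem psi_eq_prod_eFactor_mul_prod_sFactor (s e : ℕ → A) (n : ℕ) (u : ℕ → K) :
    Psi s e n u = ((lexPairs n).map fun p => eFactor s e u p.1 p.2).prod *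
      ((lexPairs n).map fun p => sFactor s u p.1 p.2).prod :=
  rfl

namespace IsBrauer

variable {R : Type*} [CommRing R] [Algebra R A] {n : ℕ} {ω : R} {s e : ℕ → A}

theorem eFactor_mul_eFactor_mul_sFactor (hB : IsBrauer n ω s e) {u : ℕ → K} {i M N : ℕ}
    (hi : 1 ≤ i) (hiM : i < M) (hMN : M < N) (hN : N ≤ n)
    (hiN : u i + u N ≠ 0) (hMN' : u M + u N ≠ 0) (hiM' : u i ≠ u M) :
    eFactor s e u i N * eFactor s e u M N * sFactor s u i M =
      sFactor s u i M * eFactor s e u M N * eFactor s e u i N :=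
  one_sub_smul_triple_comm (hB.sij_mul_eij hi hiM hMN hN) (hB.eij_mul_sij hi hiM hMN hN)
    (hB.eij_mul_eij_eq_sij_mul_eij hi hiM hMN hN) (hB.eij_mul_eij_eq_eij_mul_sij hi hiM hMN hN)
    (hB.sij_mul_self hi hiM (by omega)) (by field_simp [sub_ne_zero.mpr hiM']; ring)

theorem prod_reverse_eFactor_mul_eFactor_mul_prod_sFactor (hB : IsBrauer n ω s e) {u : ℕ → K}
    (hu : ∀ i j, 1 ≤ i → i < j → j ≤ n → u i + u j ≠ 0 ∧ u i ≠ u j) {m : ℕ} (hm : m + 1 < n) :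
    ((List.range' 1 m).reverse.map fun i => eFactor s e u i n).prod * eFactor s e u (m+1) n *
        ((List.range' 1 m).map fun i => sFactor s u i (m+1)).prod =
      ((List.range' 1 m).map fun i => sFactor s u i (m+1)).prod * eFactor s e u (m+1) n *
        ((List.range' 1 m).reverse.map fun i => eFactor s e u i n).prod := by
  refine list_prod_reverse_mul_mul_prod _ (fun i hi => ?_) ?_
  · have hi := List.mem_range'_1.mp hi
    exact hB.eFactor_mul_eFactor_mul_sFactor (by omega) (by omega) hm (by omega)
      (hu i n (by omega) (by omega) le_rfl).1 (hu (m+1) n (by omega) hm le_rfl).1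
      (hu i (m+1) (by omega) (by omega) (by omega)).2
  · refine List.Pairwise.imp_of_mem ?_ List.pairwise_lt_range'
    intro i k hi hk hik
    have hi := List.mem_range'_1.mp hi
    have hk := List.mem_range'_1.mp hk
    exact ⟨commute_one_sub_smul (hB.commute_eij_sij_nested (by omega) hik (by omega) hm le_rfl) _ _,
      commute_one_sub_smul (hB.commute_sij_eij_crossing (by omega) hik (by omega) hm le_rfl) _ _⟩

theorem prod_eFactor_mul_prod_sFactor (hB : IsBrauer n ω s e) {u : ℕ → K}
    (hu : ∀ i j, 1 ≤ i → i < j → j ≤ n → u i + u j ≠ 0 ∧ u i ≠ u j) {m : ℕ} (hm : m < n) :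
    ((List.range' 1 m).map fun i => eFactor s e u i n).prod *
        ((lexPairs m).map fun p => sFactor s u p.1 p.2).prod =
      ((lexPairs m).map fun p => sFactor s u p.1 p.2).prod *
        ((List.range' 1 m).reverse.map fun i => eFactor s e u i n).prod := by
  induction m with
  | zero => simp [lexPairs]
  | succ m ih =>
    rw [prod_lexPairs_succ _ m fun i k j hi hik hkj hj => commute_one_sub_smul
      (hB.commute_sij_sij_nested hi hik hkj (by omega) (by omega)) _ _, range'_one_succ]
    simp only [List.map_append, List.reverse_append, List.prod_append, List.reverse_singleton,
      List.singleton_append, List.map_cons, List.map_nil, List.prod_cons, List.prod_nil, mul_one]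
    set G := ((List.range' 1 m).map fun i => eFactor s e u i n).prod
    set D := ((List.range' 1 m).reverse.map fun i => eFactor s e u i n).prod
    set SP := ((lexPairs m).map fun p => sFactor s u p.1 p.2).prod
    set T := ((List.range' 1 m).map fun i => sFactor s u i (m+1)).prod
    set X := eFactor s e u (m+1) n
    have hSP : Commute X SP :=
      Commute.list_prod_right _ _ fun x hx => by
        obtain ⟨p, hp, rfl⟩ := List.mem_map.mp hx
        obtain ⟨hp1, hp12, hp2⟩ := mem_lexPairs.mp hp
        exact commute_one_sub_smul
          (hB.commute_eij_sij_disjoint hp1 hp12 (by omega) (by omega) le_rfl) _ _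
    have hcol : D * X * T = T * X * D := hB.prod_reverse_eFactor_mul_eFactor_mul_prod_sFactor hu hm
    calc G * X * (SP * T) = G * (X * SP) * T := by simp only [mul_assoc]
      _ = G * SP * (X * T) := by rw [hSP.eq]; simp only [mul_assoc]
      _ = SP * (D * X * T) := by rw [ih (by omega)]; simp only [mul_assoc]
      _ = SP * T * (X * D) := by rw [hcol]; simp only [mul_assoc]

theorem psi_succ {m : ℕ} (hB : IsBrauer (m+1) ω s e) {u : ℕ → K}
    (hu : ∀ i j, 1 ≤ i → i < j → j ≤ m + 1 → u i + u j ≠ 0 ∧ u i ≠ u j) :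
    Psi s e (m+1) u = Psi s e m u *
      ((List.range' 1 m).reverse.map fun i => eFactor s e u i (m+1)).prod *
      ((List.range' 1 m).map fun i => sFactor s u i (m+1)).prod := by
  rw [psi_eq_prod_eFactor_mul_prod_sFactor, psi_eq_prod_eFactor_mul_prod_sFactor,
    prod_lexPairs_succ _ m fun i k j hi hik hkj hj => commute_one_sub_smul
      (hB.commute_eij_eij_nested hi hik hkj (by omega) le_rfl) _ _,
    prod_lexPairs_succ _ m fun i k j hi hik hkj hj => commute_one_sub_smul
      (hB.commute_sij_sij_nested hi hik hkj (by omega) le_rfl) _ _]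
  dsimp only
  set EP := ((lexPairs m).map fun p => eFactor s e u p.1 p.2).prod
  set SP := ((lexPairs m).map fun p => sFactor s u p.1 p.2).prod
  set G := ((List.range' 1 m).map fun i => eFactor s e u i (m+1)).prod
  set T := ((List.range' 1 m).map fun i => sFactor s u i (m+1)).prod
  set D := ((List.range' 1 m).reverse.map fun i => eFactor s e u i (m+1)).prod
  calc EP * G * (SP * T) = EP * (G * SP) * T := by simp only [mul_assoc]
    _ = EP * (SP * D) * T := by rw [hB.prod_eFactor_mul_prod_sFactor hu m.lt_succ_self]
    _ = EP * SP * D * T := by simp only [mul_assoc]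

end IsBrauer

end Fusion

/-- Stated in any `K`-algebra over a field `K ⊇ ℂ(ω)`, for values `u_i` at which all the
denominators are nonzero; independent indeterminates `u_1, …, u_n` are the generic case. -/
theorem psi_recursion_general
    {K : Type*} [Field K] [Algebra F K] {A : Type*} [Ring A] [Algebra K A]
    (n : ℕ) (s e : ℕ → A) (hB : IsBrauer n (algebraMap F K ωF) s e)
    (u : ℕ → K)
    (hu : ∀ i j, 1 ≤ i → i < j → j ≤ n → u i + u j ≠ 0 ∧ u i ≠ u j) :
    Psi s e n u =
      Psi s e (n-1) u *
      (((List.range' 1 (n-1)).reverse.map fun i =>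
        1 - (u i + u n)⁻¹ • eij s e i n).prod) *
      (((List.range' 1 (n-1)).map fun i =>
        1 - (u i - u n)⁻¹ • sij s i n).prod) := by
  cases n with
  | zero => simp
  | succ m => exact hB.psi_succ hu

/-- **The recursion (3.10).** For `n ≥ 2`, in `B_n(ω) ⊗ F(u_1,…,u_n)`,
`Ψ(u_1,…,u_n) = Ψ(u_1,…,u_{n-1}) (1 - e_{n-1,n}/(u_{n-1}+u_n)) ⋯ (1 - e_{1,n}/(u_1+u_n)) ·
(1 - s_{1,n}/(u_1-u_n)) ⋯ (1 - s_{n-1,n}/(u_{n-1}-u_n))`.  This is stated in any algebra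
over a field `K ⊇ ℂ(ω)` with elements `u_1,…,u_n` at which all the denominators are
nonzero (in particular for independent indeterminates `u_1,…,u_n`). -/
theorem psi_recursion
    {K : Type*} [Field K] [Algebra F K] {A : Type*} [Ring A] [Algebra K A]
    (n : ℕ) (hn : 2 ≤ n) (s e : ℕ → A) (hB : IsBrauer n (algebraMap F K ωF) s e)
    (u : ℕ → K)
    (hu : ∀ i j, 1 ≤ i → i < j → j ≤ n → u i + u j ≠ 0 ∧ u i ≠ u j) :
    Psi s e n u =
      Psi s e (n-1) u *
      (((List.range' 1 (n-1)).reverse.map fun i =>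
        1 - (u i + u n)⁻¹ • eij s e i n).prod) *
      (((List.range' 1 (n-1)).map fun i =>
        1 - (u i - u n)⁻¹ • sij s i n).prod) :=
  psi_recursion_general n s e hB u hu

end BrauerFusion
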